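/- arXiv:1406.5140 — 6 statements merged into one kernel-verified Lean document; each statement's English description precedes it below -/
import Mathlib

section
/- Let p be a prime not dividing m+1, and let a, b ∈ E_p^{m+1}. Define F(z) = (∑_j a_j z_j)/(∑_j b_j z_j). Then for all z, t ∈ E_p^{m+1} we have |F(z) - F(t)|_p ≤ (1/p) · max_j |z_j - t_j|_p. -/
/-!
Every element of `E_p` is `≡ 1 mod p`, so all products `a_j b_k` are `1` up to an error of norm
`≤ 1/p`. Cross-multiplying, the numerator of `F(z) - F(t)` is
`∑_{j,k} a_j b_k (z_j t_k - t_j z_k)`, and replacing each `a_j b_k` by `1` changes nothing since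
`∑_{j,k} (z_j t_k - t_j z_k) = 0`; every remaining term has norm `≤ (1/p) max_j |z_j - t_j|`.
The denominators are units: `∑_j b_j z_j ≡ m + 1 mod p`, and `p ∤ m + 1`.
-/

/-- `x ∈ E_p` : a unit with `|x - 1|_p < p^(-1/(p-1))`. -/
def IsEp (p : ℕ) [Fact p.Prime] (x : ℚ_[p]) : Prop :=
  ‖x‖ = 1 ∧ ‖x - 1‖ < (p : ℝ) ^ (-(1 : ℝ) / ((p : ℝ) - 1))

section Ultrametric

variable {R : Type*} [SeminormedRing R] [IsUltrametricDist R]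

lemma norm_mul_sub_one_le_of_norm_sub_one_le {x y : R} {r : ℝ} (hx : ‖x‖ ≤ 1)
    (hx₁ : ‖x - 1‖ ≤ r) (hy₁ : ‖y - 1‖ ≤ r) : ‖x * y - 1‖ ≤ r := by
  rw [show x * y - 1 = x * (y - 1) + (x - 1) by noncomm_ring]
  refine (IsUltrametricDist.norm_add_le_max _ _).trans (max_le ?_ hx₁)
  calc ‖x * (y - 1)‖ ≤ ‖x‖ * ‖y - 1‖ := norm_mul_le _ _
    _ ≤ 1 * r := by gcongr
    _ = r := one_mul r

lemma norm_mul_sub_mul_le_max {x y u v : R} (hu : ‖u‖ ≤ 1) (hv : ‖v‖ ≤ 1) :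
    ‖x * v - u * y‖ ≤ max ‖x - u‖ ‖y - v‖ := by
  rw [show x * v - u * y = (x - u) * v + u * (v - y) by noncomm_ring, norm_sub_rev y v]
  refine (IsUltrametricDist.norm_add_le_max _ _).trans (max_le_max ?_ ?_)
  · exact (norm_mul_le _ _).trans (mul_le_of_le_one_right (norm_nonneg _) hv)
  · exact (norm_mul_le _ _).trans (mul_le_of_le_one_left (norm_nonneg _) hu)

lemma norm_sum_eq_one_of_norm_sub_one_lt {ι : Type*} {s : Finset ι} {x : ι → R}
    (hs : ‖(s.card : R)‖ = 1) (hx : ∀ i ∈ s, ‖x i - 1‖ < 1) : ‖∑ i ∈ s, x i‖ = 1 := by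
  have hne : s.Nonempty := Finset.nonempty_iff_ne_empty.2 fun h => by simp [h] at hs
  have hsmall : ‖∑ i ∈ s, (x i - 1)‖ < 1 :=
    (hne.norm_sum_le_sup'_norm _).trans_lt ((Finset.sup'_lt_iff hne).2 hx)
  have hsplit : ∑ i ∈ s, x i = s.card + ∑ i ∈ s, (x i - 1) := by
    simp [Finset.sum_sub_distrib]
  rw [hsplit, IsUltrametricDist.norm_add_eq_max_of_norm_ne_norm (hs ▸ hsmall.ne'), hs,
    max_eq_left hsmall.le]

end Ultrametric

/-- Subtracting `1` from `a j * b k` is harmless: `∑ j, ∑ k, (z j * t k - t j * z k) = 0`. -/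
lemma Finset.sum_mul_sum_sub_sum_mul_sum {R ι : Type*} [CommRing R] (s : Finset ι)
    (a b z t : ι → R) :
    (∑ j ∈ s, a j * z j) * (∑ k ∈ s, b k * t k) -
        (∑ j ∈ s, a j * t j) * (∑ k ∈ s, b k * z k) =
      ∑ j ∈ s, ∑ k ∈ s, (a j * b k - 1) * (z j * t k - t j * z k) := by
  have hsymm : ∑ j ∈ s, ∑ k ∈ s, z j * t k = ∑ j ∈ s, ∑ k ∈ s, t j * z k := by
    rw [Finset.sum_comm]
    simp only [mul_comm]
  calc _ = ∑ j ∈ s, ∑ k ∈ s, a j * b k * (z j * t k - t j * z k) := by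
        simp only [Finset.sum_mul_sum, ← Finset.sum_sub_distrib]
        exact Finset.sum_congr rfl fun j _ => Finset.sum_congr rfl fun k _ => by ring
    _ = _ := by
        simp only [sub_mul, one_mul, Finset.sum_sub_distrib, hsymm, sub_self, sub_zero]

lemma norm_div_sub_div_of_norm_eq_one {K : Type*} [NormedField K] {a b c d : K}
    (hb : ‖b‖ = 1) (hd : ‖d‖ = 1) : ‖a / b - c / d‖ = ‖a * d - c * b‖ := by
  rw [div_sub_div _ _ (norm_ne_zero_iff.1 (hb.trans_ne one_ne_zero))
    (norm_ne_zero_iff.1 (hd.trans_ne one_ne_zero)), norm_div, norm_mul, hb, hd, mul_one, div_one,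
    mul_comm b c]

lemma Padic.norm_le_inv_of_norm_lt_one {p : ℕ} [Fact p.Prime] {x : ℚ_[p]} (h : ‖x‖ < 1) :
    ‖x‖ ≤ (p : ℝ)⁻¹ := by
  simpa using (Padic.norm_le_pow_iff_norm_lt_pow_add_one x (-1)).2 (by simpa using h)

namespace IsEp

variable {p : ℕ} [Fact p.Prime] {x y : ℚ_[p]}

lemma norm_sub_one_le (h : IsEp p x) : ‖x - 1‖ ≤ (p : ℝ)⁻¹ := by
  have hp : (1 : ℝ) < p := mod_cast (Fact.out : p.Prime).one_lt
  refine Padic.norm_le_inv_of_norm_lt_one (h.2.trans_le ?_)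
  exact Real.rpow_le_one_of_one_le_of_nonpos hp.le
    (div_nonpos_of_nonpos_of_nonneg (by norm_num) (by linarith))

lemma norm_mul_sub_one_le (hx : IsEp p x) (hy : IsEp p y) : ‖x * y - 1‖ ≤ (p : ℝ)⁻¹ :=
  norm_mul_sub_one_le_of_norm_sub_one_le hx.1.le hx.norm_sub_one_le hy.norm_sub_one_le

lemma norm_mul_sub_one_lt_one (hx : IsEp p x) (hy : IsEp p y) : ‖x * y - 1‖ < 1 :=
  (hx.norm_mul_sub_one_le hy).trans_lt <|
    inv_lt_one_of_one_lt₀ (mod_cast (Fact.out : p.Prime).one_lt)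

end IsEp

theorem F_contraction (p : ℕ) [Fact p.Prime] (m : ℕ) (hpm : ¬ p ∣ (m + 1))
    (a b : Fin (m + 1) → ℚ_[p])
    (ha : ∀ j, IsEp p (a j)) (hb : ∀ j, IsEp p (b j))
    (z t : Fin (m + 1) → ℚ_[p])
    (hz : ∀ j, IsEp p (z j)) (ht : ∀ j, IsEp p (t j)) :
    ‖(∑ j, a j * z j) / (∑ j, b j * z j) -
      (∑ j, a j * t j) / (∑ j, b j * t j)‖ ≤
      (1 / p) * (Finset.univ.sup' Finset.univ_nonempty fun j => ‖z j - t j‖) := by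
  set M := Finset.univ.sup' Finset.univ_nonempty fun j => ‖z j - t j‖
  have hM : ∀ j, ‖z j - t j‖ ≤ M := fun j =>
    Finset.le_sup' (fun j => ‖z j - t j‖) (Finset.mem_univ j)
  have hM₀ : 0 ≤ M := (norm_nonneg _).trans (hM 0)
  have hcard : ‖((Finset.univ : Finset (Fin (m + 1))).card : ℚ_[p])‖ = 1 := by
    rw [Finset.card_univ, Fintype.card_fin, Padic.norm_natCast_eq_one_iff]
    exact (Fact.out : p.Prime).coprime_iff_not_dvd.2 hpm
  have hden : ∀ w : Fin (m + 1) → ℚ_[p], (∀ j, IsEp p (w j)) → ‖∑ j, b j * w j‖ = 1 :=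
    fun w hw => norm_sum_eq_one_of_norm_sub_one_lt hcard fun j _ =>
      (hb j).norm_mul_sub_one_lt_one (hw j)
  rw [norm_div_sub_div_of_norm_eq_one (hden z hz) (hden t ht),
    Finset.sum_mul_sum_sub_sum_mul_sum, one_div]
  refine IsUltrametricDist.norm_sum_le_of_forall_le_of_nonneg (by positivity) fun j _ =>
    IsUltrametricDist.norm_sum_le_of_forall_le_of_nonneg (by positivity) fun k _ => ?_
  rw [norm_mul]
  exact mul_le_mul ((ha j).norm_mul_sub_one_le (hb k))
    ((norm_mul_sub_mul_le_max (ht j).1.le (ht k).1.le).trans (max_le (hM j) (hM k)))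
    (norm_nonneg _) (by positivity)
end

section
/- Let p ≠ 3 be a prime, k ≥ 1, and a ∈ E_p. Define f(x) = ((2a + x)/(a² + ax + 1))^k. Then f maps E_p into E_p, i.e., for every x ∈ E_p, |f(x)|_p = 1 and |f(x) - 1|_p < p^(-1/(p-1)). -/
open IsUltrametricDist

theorem IsUltrametricDist.norm_pow_sub_one_le {R : Type*} [SeminormedRing R] [NormOneClass R]
    [IsUltrametricDist R] {y : R} (hy : ‖y‖ ≤ 1) (n : ℕ) :
    ‖y ^ n - 1‖ ≤ ‖y - 1‖ := by
  induction n with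
  | zero => simp
  | succ n ih =>
    have hyn : ‖y ^ n * (y - 1)‖ ≤ ‖y - 1‖ :=
      (norm_mul_le _ _).trans <| mul_le_of_le_one_left (norm_nonneg _) <|
        (_root_.norm_pow_le _ _).trans (pow_le_one₀ (norm_nonneg _) hy)
    calc ‖y ^ (n + 1) - 1‖ = ‖y ^ n * (y - 1) + (y ^ n - 1)‖ := by
          rw [pow_succ, mul_sub, mul_one, sub_add_sub_cancel]
      _ ≤ ‖y - 1‖ := (norm_add_le_max _ _).trans (max_le hyn ih)

namespace IsEp

variable {p : ℕ} [Fact p.Prime] {a x : ℚ_[p]}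

theorem rpow_neg_one_div_sub_one_lt_one : (p : ℝ) ^ (-(1 : ℝ) / ((p : ℝ) - 1)) < 1 := by
  have hp : (1 : ℝ) < p := mod_cast (Fact.out : p.Prime).one_lt
  exact Real.rpow_lt_one_of_one_lt_of_neg hp (div_neg_of_neg_of_pos (by norm_num) (by linarith))

theorem of_norm_sub_one_lt (h : ‖x - 1‖ < (p : ℝ) ^ (-(1 : ℝ) / ((p : ℝ) - 1))) :
    IsEp p x := by
  refine ⟨?_, h⟩
  simpa using Padic.norm_eq_of_norm_sub_lt_right (h.trans_le (by simpa using
    rpow_neg_one_div_sub_one_lt_one.le))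

theorem norm_sub_one_lt_one (hx : IsEp p x) : ‖x - 1‖ < 1 :=
  hx.2.trans rpow_neg_one_div_sub_one_lt_one

theorem pow (hx : IsEp p x) (n : ℕ) : IsEp p (x ^ n) :=
  of_norm_sub_one_lt ((norm_pow_sub_one_le hx.1.le n).trans_lt hx.2)

theorem norm_sq_add_mul_add_one (hp3 : p ≠ 3) (ha : IsEp p a) (hx : IsEp p x) :
    ‖a ^ 2 + a * x + 1‖ = 1 := by
  have h3 : ‖(3 : ℚ_[p])‖ = 1 := mod_cast Padic.norm_natCast_eq_one_iff.2
    ((Nat.coprime_primes Fact.out Nat.prime_three).2 hp3)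
  have hmul : ‖(a - 1) * (a + 1)‖ < 1 := by
    rw [norm_mul]
    refine mul_lt_one_of_nonneg_of_lt_one_left (norm_nonneg _) ha.norm_sub_one_lt_one ?_
    simpa [ha.1] using norm_add_one_le_max_norm_one a
  have hsub : ‖a ^ 2 + a * x + 1 - 3‖ < ‖(3 : ℚ_[p])‖ := by
    rw [h3, show a ^ 2 + a * x + 1 - 3 = (a - 1) * (a + 1) + (a * (x - 1) + (a - 1)) by ring]
    refine (norm_add_le_max _ _).trans_lt (max_lt hmul ((norm_add_le_max _ _).trans_lt
      (max_lt ?_ ha.norm_sub_one_lt_one)))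
    rw [norm_mul, ha.1, one_mul]
    exact hx.norm_sub_one_lt_one
  rw [Padic.norm_eq_of_norm_sub_lt_right hsub, h3]

end IsEp

theorem f_maps_Ep_to_Ep_general (p : ℕ) [Fact p.Prime] (hp3 : p ≠ 3) (k : ℕ)
    (a : ℚ_[p]) (ha : IsEp p a) (x : ℚ_[p]) (hx : IsEp p x) :
    IsEp p (((2 * a + x) / (a ^ 2 + a * x + 1)) ^ k) := by
  have hD := ha.norm_sq_add_mul_add_one hp3 hx
  have hD0 : a ^ 2 + a * x + 1 ≠ 0 := norm_ne_zero_iff.1 (by rw [hD]; exact one_ne_zero)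
  have hy : (2 * a + x) / (a ^ 2 + a * x + 1) - 1 =
      -((a - 1) * (a - 1 + x)) / (a ^ 2 + a * x + 1) := by
    rw [div_sub_one hD0, show 2 * a + x - (a ^ 2 + a * x + 1) = -((a - 1) * (a - 1 + x)) by ring]
  refine IsEp.pow (IsEp.of_norm_sub_one_lt ?_) k
  calc ‖(2 * a + x) / (a ^ 2 + a * x + 1) - 1‖ = ‖a - 1‖ * ‖a - 1 + x‖ := by
        rw [hy, norm_div, hD, div_one, norm_neg, norm_mul]
    _ ≤ ‖a - 1‖ := mul_le_of_le_one_right (norm_nonneg _) <|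
        (norm_add_le_max _ _).trans (max_le ha.norm_sub_one_lt_one.le hx.1.le)
    _ < _ := ha.2

theorem f_maps_Ep_to_Ep (p : ℕ) [Fact p.Prime] (hp3 : p ≠ 3) (k : ℕ) (hk : 1 ≤ k)
    (a : ℚ_[p]) (ha : IsEp p a) (x : ℚ_[p]) (hx : IsEp p x) :
    IsEp p (((2 * a + x) / (a ^ 2 + a * x + 1)) ^ k) :=
  f_maps_Ep_to_Ep_general p hp3 k a ha x hx
end

section
/- Let p ≠ 3 be a prime, k ≥ 1, and a ∈ E_p. Define f(x) = ((2a + x)/(a² + ax + 1))^k. Then for all x, y ∈ E_p: |f(x) - f(y)|_p ≤ (1/p)|x - y|_p. -/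
namespace IsUltrametricDist

lemma norm_eq_of_norm_sub_lt {S : Type*} [SeminormedAddGroup S] [IsUltrametricDist S] {z c : S}
    (h : ‖z - c‖ < ‖c‖) : ‖z‖ = ‖c‖ := by
  rw [← sub_add_cancel z c, norm_add_eq_max_of_norm_ne_norm h.ne, max_eq_right h.le]

section Ring

variable {R : Type*} [SeminormedRing R] [NormOneClass R] [IsUltrametricDist R]

lemma norm_eq_one_of_norm_sub_one_lt_one {z : R} (h : ‖z - 1‖ < 1) : ‖z‖ = 1 := by
  simpa using norm_eq_of_norm_sub_lt (c := (1 : R)) (by simpa using h)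

lemma norm_two_le_one : ‖(2 : R)‖ ≤ 1 := by
  exact_mod_cast norm_natCast_le_one R 2

lemma norm_pow_sub_pow_le_of_norm_le_one {u v : R} (hu : ‖u‖ ≤ 1) (hv : ‖v‖ ≤ 1) (k : ℕ) :
    ‖u ^ k - v ^ k‖ ≤ ‖u - v‖ := by
  induction k with
  | zero => simp
  | succ n ih =>
    have hun : ‖u ^ n‖ ≤ 1 := (_root_.norm_pow_le u n).trans (pow_le_one₀ (norm_nonneg u) hu)
    have hsplit : u ^ (n + 1) - v ^ (n + 1) = u ^ n * (u - v) + (u ^ n - v ^ n) * v := by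
      rw [pow_succ, pow_succ]; noncomm_ring
    rw [hsplit]
    refine (norm_add_le_max _ _).trans (max_le ?_ ?_)
    · exact (norm_mul_le _ _).trans (mul_le_of_le_one_left (norm_nonneg _) hun)
    · exact (norm_mul_le _ _).trans ((mul_le_of_le_one_right (norm_nonneg _) hv).trans ih)

end Ring

end IsUltrametricDist

open IsUltrametricDist

section MoebiusMap

variable {K : Type*}

def moebiusMap [Field K] (a x : K) : K := (2 * a + x) / (a ^ 2 + a * x + 1)

lemma moebiusMap_sub_moebiusMap [Field K] {a x y : K} (hx : a ^ 2 + a * x + 1 ≠ 0)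
    (hy : a ^ 2 + a * y + 1 ≠ 0) :
    moebiusMap a x - moebiusMap a y =
      (1 - a ^ 2) * (x - y) / ((a ^ 2 + a * x + 1) * (a ^ 2 + a * y + 1)) := by
  rw [moebiusMap, moebiusMap, div_sub_div _ _ hx hy]
  ring

variable [NormedField K] [IsUltrametricDist K] {a x y : K}

lemma norm_two_mul_add_eq_one (h3 : ‖(3 : K)‖ = 1) (ha : ‖a - 1‖ < 1) (hx : ‖x - 1‖ < 1) :
    ‖2 * a + x‖ = 1 := by
  rw [← h3]
  refine norm_eq_of_norm_sub_lt ?_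
  rw [h3, show 2 * a + x - 3 = 2 * (a - 1) + (x - 1) by ring]
  refine (norm_add_le_max _ _).trans_lt (max_lt ?_ hx)
  rw [norm_mul]
  exact (mul_le_of_le_one_left (norm_nonneg _) norm_two_le_one).trans_lt ha

lemma norm_sq_add_mul_add_one_eq_one (h3 : ‖(3 : K)‖ = 1) (ha : ‖a - 1‖ < 1)
    (hx : ‖x - 1‖ < 1) : ‖a ^ 2 + a * x + 1‖ = 1 := by
  have ha1 : ‖a‖ = 1 := norm_eq_one_of_norm_sub_one_lt_one ha
  have ha2 : ‖a + 2‖ ≤ 1 := (norm_add_le_max _ _).trans (max_le ha1.le norm_two_le_one)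
  rw [← h3]
  refine norm_eq_of_norm_sub_lt ?_
  rw [h3, show a ^ 2 + a * x + 1 - 3 = (a - 1) * (a + 2) + a * (x - 1) by ring]
  refine (norm_add_le_max _ _).trans_lt (max_lt ?_ ?_)
  · rw [norm_mul]
    exact (mul_le_of_le_one_right (norm_nonneg _) ha2).trans_lt ha
  · rwa [norm_mul, ha1, one_mul]

lemma norm_moebiusMap_eq_one (h3 : ‖(3 : K)‖ = 1) (ha : ‖a - 1‖ < 1) (hx : ‖x - 1‖ < 1) :
    ‖moebiusMap a x‖ = 1 := by
  rw [moebiusMap, norm_div, norm_two_mul_add_eq_one h3 ha hx,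
    norm_sq_add_mul_add_one_eq_one h3 ha hx, div_one]

lemma norm_moebiusMap_sub_moebiusMap_le (h3 : ‖(3 : K)‖ = 1) (ha : ‖a - 1‖ < 1)
    (hx : ‖x - 1‖ < 1) (hy : ‖y - 1‖ < 1) :
    ‖moebiusMap a x - moebiusMap a y‖ ≤ ‖a - 1‖ * ‖x - y‖ := by
  have hdx := norm_sq_add_mul_add_one_eq_one h3 ha hx
  have hdy := norm_sq_add_mul_add_one_eq_one h3 ha hy
  have ha2 : ‖1 - a ^ 2‖ ≤ ‖a - 1‖ := by
    rw [show 1 - a ^ 2 = (a - 1) * -(a + 1) by ring, norm_mul, norm_neg]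
    exact mul_le_of_le_one_right (norm_nonneg _) <|
      (norm_add_le_max _ _).trans (max_le (norm_eq_one_of_norm_sub_one_lt_one ha).le (by simp))
  rw [moebiusMap_sub_moebiusMap (norm_ne_zero_iff.mp (by simp [hdx]))
    (norm_ne_zero_iff.mp (by simp [hdy])), norm_div, norm_mul, norm_mul, hdx, hdy, mul_one,
    div_one]
  gcongr

theorem norm_moebiusMap_pow_sub_moebiusMap_pow_le (h3 : ‖(3 : K)‖ = 1) (ha : ‖a - 1‖ < 1)
    (hx : ‖x - 1‖ < 1) (hy : ‖y - 1‖ < 1) (k : ℕ) :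
    ‖moebiusMap a x ^ k - moebiusMap a y ^ k‖ ≤ ‖a - 1‖ * ‖x - y‖ :=
  (norm_pow_sub_pow_le_of_norm_le_one (norm_moebiusMap_eq_one h3 ha hx).le
    (norm_moebiusMap_eq_one h3 ha hy).le k).trans (norm_moebiusMap_sub_moebiusMap_le h3 ha hx hy)

end MoebiusMap

namespace Padic

variable {p : ℕ} [Fact p.Prime]

lemma norm_le_inv_of_norm_lt_one_s8 {z : ℚ_[p]} (h : ‖z‖ < 1) : ‖z‖ ≤ (p : ℝ)⁻¹ := by
  simpa using (norm_le_pow_iff_norm_lt_pow_add_one z (-1)).2 (by simpa using h)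

lemma norm_three_eq_one (hp3 : p ≠ 3) : ‖(3 : ℚ_[p])‖ = 1 := by
  exact_mod_cast norm_natCast_eq_one_iff.2 <|
    (Nat.coprime_primes Fact.out Nat.prime_three).2 hp3

end Padic

lemma IsEp.norm_sub_one_lt_one_s8 {p : ℕ} [Fact p.Prime] {x : ℚ_[p]} (hx : IsEp p x) :
    ‖x - 1‖ < 1 := by
  have hp : (1 : ℝ) ≤ p := by exact_mod_cast (Fact.out : p.Prime).one_le
  refine hx.2.trans_le (Real.rpow_le_one_of_one_le_of_nonpos hp ?_)
  exact div_nonpos_of_nonpos_of_nonneg (by norm_num) (by linarith)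

theorem f_contraction_general (p : ℕ) [Fact p.Prime] (hp3 : p ≠ 3) (k : ℕ)
    (a : ℚ_[p]) (ha : IsEp p a) (x y : ℚ_[p]) (hx : IsEp p x) (hy : IsEp p y) :
    ‖((2 * a + x) / (a ^ 2 + a * x + 1)) ^ k -
      ((2 * a + y) / (a ^ 2 + a * y + 1)) ^ k‖ ≤ (1 / p) * ‖x - y‖ := by
  have ha1 := ha.norm_sub_one_lt_one_s8
  calc _ ≤ ‖a - 1‖ * ‖x - y‖ :=
        norm_moebiusMap_pow_sub_moebiusMap_pow_le (Padic.norm_three_eq_one hp3) ha1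
          hx.norm_sub_one_lt_one_s8 hy.norm_sub_one_lt_one_s8 k
    _ ≤ (1 / p) * ‖x - y‖ := by
        rw [one_div]
        gcongr
        exact Padic.norm_le_inv_of_norm_lt_one_s8 ha1

theorem f_contraction (p : ℕ) [Fact p.Prime] (hp3 : p ≠ 3) (k : ℕ) (hk : 1 ≤ k)
    (a : ℚ_[p]) (ha : IsEp p a) (x y : ℚ_[p]) (hx : IsEp p x) (hy : IsEp p y) :
    ‖((2 * a + x) / (a ^ 2 + a * x + 1)) ^ k -
      ((2 * a + y) / (a ^ 2 + a * y + 1)) ^ k‖ ≤ (1 / p) * ‖x - y‖ :=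
  f_contraction_general p hp3 k a ha x y hx hy
end

section
/- Let p = 3 and let θ ∈ ℚ_3 satisfy |θ - 1|_3 < 3^(-2) (i.e., θ ≡ 1 mod 27). For any k ≥ 1, the polynomial g(x) = θx^{k+1} - x^k + (θ² + 1)x - 2θ has a unique root x_* ∈ ℤ_3 with x_* ≡ 1 (mod 9). -/
/-!
Write `e = θ - 1`. Then `g(1) = θ e` and `g'(1) = 3 + e (θ + k + 2)`, so `|g'(1)| = 3⁻¹`
and `|g(1)| ≤ |e| < 3⁻² = |g'(1)|²`. Hensel's lemma therefore gives a unique root `x ∈ ℤ_3` with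
`|x - 1| < |g'(1)| = 3⁻¹`, that is, with `x ≡ 1 (mod 9)`.
-/

open Polynomial

namespace PadicInt

variable {p : ℕ} [Fact p.Prime]

theorem existsUnique_norm_le_one_iff {P : ℚ_[p] → Prop} :
    (∃! x : ℚ_[p], ‖x‖ ≤ 1 ∧ P x) ↔ ∃! z : ℤ_[p], P z := by
  constructor
  · rintro ⟨x, ⟨hx, hPx⟩, huniq⟩
    exact ⟨⟨x, hx⟩, hPx, fun z hz => Subtype.ext (huniq z ⟨z.norm_le_one, hz⟩)⟩
  · rintro ⟨z, hPz, huniq⟩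
    exact ⟨z, ⟨z.norm_le_one, hPz⟩,
      fun x ⟨hx, hPx⟩ => congrArg Subtype.val (huniq ⟨x, hx⟩ hPx)⟩

theorem existsUnique_eval_eq_zero_of_norm_lt {F : ℤ_[p][X]} {a : ℤ_[p]}
    (h : ‖F.eval a‖ < ‖F.derivative.eval a‖ ^ 2) :
    ∃! z : ℤ_[p], ‖z - a‖ < ‖F.derivative.eval a‖ ∧ F.eval z = 0 := by
  obtain ⟨z, hz, hza, -, huniq⟩ := hensels_lemma (F := F) (a := a) (by simpa using h)
  simp only [coe_aeval_eq_eval] at hz hza huniq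
  exact ⟨z, ⟨hza, hz⟩, fun z' ⟨hz'a, hz'⟩ => huniq z' hz' hz'a⟩

theorem norm_three : ‖(3 : ℤ_[3])‖ = 3⁻¹ := by
  simpa using norm_p (p := 3)

end PadicInt

section gPoly

variable {R : Type*} [CommRing R]

noncomputable def gPoly (θ : R) (k : ℕ) : R[X] :=
  C θ * X ^ (k + 1) - X ^ k + C (θ ^ 2 + 1) * X - C (2 * θ)

theorem eval_gPoly (θ x : R) (k : ℕ) :
    (gPoly θ k).eval x = θ * x ^ (k + 1) - x ^ k + (θ ^ 2 + 1) * x - 2 * θ := by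
  simp [gPoly]

theorem eval_one_gPoly (θ : R) (k : ℕ) : (gPoly θ k).eval 1 = θ * (θ - 1) := by
  rw [eval_gPoly]
  ring

theorem eval_one_derivative_gPoly (θ : R) (k : ℕ) :
    (gPoly θ k).derivative.eval 1 = (θ - 1) * (θ + k + 2) + 3 := by
  simp [gPoly, derivative_pow]
  ring

end gPoly

section ThreeAdic

variable {θ : ℤ_[3]}

theorem norm_eval_one_derivative_gPoly (hθ : ‖θ - 1‖ < 3⁻¹) (k : ℕ) :
    ‖(gPoly θ k).derivative.eval 1‖ = 3⁻¹ := by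
  have hsmall : ‖(θ - 1) * (θ + k + 2)‖ < ‖(3 : ℤ_[3])‖ := by
    rw [PadicInt.norm_three]
    calc ‖(θ - 1) * (θ + k + 2)‖ = ‖θ - 1‖ * ‖θ + k + 2‖ := norm_mul _ _
      _ ≤ ‖θ - 1‖ := mul_le_of_le_one_right (norm_nonneg _) (PadicInt.norm_le_one _)
      _ < 3⁻¹ := hθ
  rw [eval_one_derivative_gPoly, PadicInt.norm_add_eq_max_of_ne hsmall.ne,
    max_eq_right hsmall.le, PadicInt.norm_three]

theorem norm_eval_one_gPoly_lt_sq (hθ : ‖θ - 1‖ < 3⁻¹ ^ 2) (k : ℕ) :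
    ‖(gPoly θ k).eval 1‖ < ‖(gPoly θ k).derivative.eval 1‖ ^ 2 := by
  rw [norm_eval_one_derivative_gPoly (hθ.trans (by norm_num)), eval_one_gPoly]
  calc ‖θ * (θ - 1)‖ = ‖θ‖ * ‖θ - 1‖ := norm_mul _ _
    _ ≤ ‖θ - 1‖ := mul_le_of_le_one_left (norm_nonneg _) (PadicInt.norm_le_one _)
    _ < 3⁻¹ ^ 2 := hθ

end ThreeAdic

theorem hensel_root_near_one_general (θ : ℚ_[3]) (hθ : ‖θ - 1‖ < (3 : ℝ) ^ (-2 : ℤ))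
    (k : ℕ) :
    ∃! x : ℚ_[3], ‖x‖ ≤ 1 ∧ ‖x - 1‖ ≤ (3 : ℝ) ^ (-2 : ℤ) ∧
      θ * x ^ (k + 1) - x ^ k + (θ ^ 2 + 1) * x - 2 * θ = 0 := by
  have hθ_int : ‖θ‖ ≤ 1 := by
    have hθ_lt : ‖θ - 1‖ < ‖(1 : ℚ_[3])‖ := by simpa using hθ.trans (by norm_num)
    exact ((Padic.norm_eq_of_norm_sub_lt_right hθ_lt).trans norm_one).le
  obtain ⟨θ, rfl⟩ : ∃ t : ℤ_[3], (t : ℚ_[3]) = θ := ⟨⟨θ, hθ_int⟩, rfl⟩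
  have hθ' : ‖θ - 1‖ < 3⁻¹ ^ 2 := by simpa [PadicInt.norm_def] using hθ
  rw [PadicInt.existsUnique_norm_le_one_iff]
  refine (existsUnique_congr fun z => and_congr ?_ ?_).2
    (PadicInt.existsUnique_eval_eq_zero_of_norm_lt (norm_eval_one_gPoly_lt_sq hθ' k))
  · rw [norm_eval_one_derivative_gPoly (hθ'.trans (by norm_num)),
      ← PadicInt.coe_one, ← PadicInt.coe_sub, ← PadicInt.norm_def]
    simpa using PadicInt.norm_le_pow_iff_norm_lt_pow_add_one (p := 3) (z - 1) (-2)
  · rw [eval_gPoly, ← PadicInt.coe_eq_zero]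
    push_cast
    rfl

theorem hensel_root_near_one (θ : ℚ_[3]) (hθ : ‖θ - 1‖ < (3 : ℝ) ^ (-2 : ℤ))
    (k : ℕ) (hk : 1 ≤ k) :
    ∃! x : ℚ_[3], ‖x‖ ≤ 1 ∧ ‖x - 1‖ ≤ (3 : ℝ) ^ (-2 : ℤ) ∧
      θ * x ^ (k + 1) - x ^ k + (θ ^ 2 + 1) * x - 2 * θ = 0 :=
  hensel_root_near_one_general θ hθ k
end

section
/- Let θ ∈ ℚ_3 with |θ|_3 = 1 and θ ≡ 10 (mod 27), and suppose 12θ³ - 4θ + 1 = 0. Then 1 - 7θ² ≡ 3 (mod 27), and consequently there is no square root of 1 - 7θ² in ℚ_3. -/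
/-!
Since `θ` is `3`-adically integral and `θ ≡ 10 (mod 27)`, also `1 - 7θ² ≡ 1 - 7 · 10² = 3 - 26 · 27`.
Hence `1 - 7θ²` has the norm of `3`, i.e. valuation `1`, while every square in `ℚ_[3]` has even
valuation.
-/

section Ultrametric

variable {R : Type*} [SeminormedCommRing R] [NormOneClass R] [IsUltrametricDist R]

lemma norm_pow_sub_pow_le {x y : R} (hx : ‖x‖ ≤ 1) (hy : ‖y‖ ≤ 1) (n : ℕ) :
    ‖x ^ n - y ^ n‖ ≤ ‖x - y‖ := by
  have hpow {z : R} (hz : ‖z‖ ≤ 1) (k : ℕ) : ‖z ^ k‖ ≤ 1 :=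
    (norm_pow_le z k).trans (pow_le_one₀ (norm_nonneg z) hz)
  have hsum : ‖∑ i ∈ Finset.range n, x ^ i * y ^ (n - 1 - i)‖ ≤ 1 :=
    IsUltrametricDist.norm_sum_le_of_forall_le_of_nonneg zero_le_one fun i _ ↦
      (norm_mul_le _ _).trans <| mul_le_one₀ (hpow hx i) (norm_nonneg _) (hpow hy _)
  rw [← geom_sum₂_mul]
  exact (norm_mul_le _ _).trans (mul_le_of_le_one_left (norm_nonneg _) hsum)

lemma norm_intCast_mul_le (m : ℤ) (x : R) : ‖(m : R) * x‖ ≤ ‖x‖ :=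
  (norm_mul_le _ _).trans <|
    mul_le_of_le_one_left (norm_nonneg x) (IsUltrametricDist.norm_intCast_le_one R m)

end Ultrametric

namespace Padic

variable {p : ℕ} [Fact p.Prime]

lemma valuation_eq_of_norm_eq {x y : ℚ_[p]} (h : ‖x‖ = ‖y‖) : x.valuation = y.valuation := by
  rcases eq_or_ne x 0 with rfl | hx
  · rw [norm_zero, eq_comm, norm_eq_zero] at h
    rw [h]
  have hy : y ≠ 0 := norm_ne_zero_iff.mp (h ▸ norm_ne_zero_iff.mpr hx)
  have hp : (1 : ℝ) < p := mod_cast (Fact.out : p.Prime).one_lt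
  rw [norm_eq_zpow_neg_valuation hx, norm_eq_zpow_neg_valuation hy] at h
  exact neg_injective ((zpow_right_strictMono₀ hp).injective h)

lemma not_isSquare_of_odd_valuation {y : ℚ_[p]} (hy : Odd y.valuation) : ¬IsSquare y := by
  rintro ⟨x, rfl⟩
  rw [← sq, valuation_pow, Nat.cast_ofNat] at hy
  exact Int.not_even_iff_odd.mpr hy (even_two_mul _)

end Padic

theorem no_sqrt_one_sub_seven_theta_sq_general (θ : ℚ_[3])
    (hθ10 : ‖θ - 10‖ ≤ (3 : ℝ) ^ (-3 : ℤ)) :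
    ‖(1 - 7 * θ ^ 2) - 3‖ ≤ (3 : ℝ) ^ (-3 : ℤ) ∧
      ¬ ∃ x : ℚ_[3], x ^ 2 = 1 - 7 * θ ^ 2 := by
  have h10 : ‖(10 : ℚ_[3])‖ ≤ 1 := by
    simpa using IsUltrametricDist.norm_intCast_le_one ℚ_[3] 10
  have hθ : ‖θ‖ ≤ 1 := by
    have h27 : (3 : ℝ) ^ (-3 : ℤ) ≤ 1 := zpow_le_one_of_nonpos₀ (by norm_num) (by norm_num)
    simpa using (IsUltrametricDist.norm_add_le_max (θ - 10) 10).trans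
      (max_le (hθ10.trans h27) h10)
  have h3 : ‖(3 : ℚ_[3])‖ = 3⁻¹ := by simpa using Padic.norm_p (p := 3)
  have h27 : ‖(27 : ℚ_[3])‖ = (3 : ℝ) ^ (-3 : ℤ) := by
    rw [show (27 : ℚ_[3]) = 3 ^ 3 by norm_num, norm_pow, h3]
    norm_num
  have hcong : ‖(1 - 7 * θ ^ 2) - 3‖ ≤ (3 : ℝ) ^ (-3 : ℤ) := by
    have hsq : ‖θ ^ 2 - 10 ^ 2‖ ≤ (3 : ℝ) ^ (-3 : ℤ) := (norm_pow_sub_pow_le hθ h10 2).trans hθ10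
    have hexpand : (1 - 7 * θ ^ 2) - 3 =
        ((-7 : ℤ) : ℚ_[3]) * (θ ^ 2 - 10 ^ 2) + ((-26 : ℤ) : ℚ_[3]) * 27 := by
      push_cast; ring
    rw [hexpand]
    exact (IsUltrametricDist.norm_add_le_max _ _).trans <| max_le
      ((norm_intCast_mul_le _ _).trans hsq) ((norm_intCast_mul_le _ _).trans h27.le)
  refine ⟨hcong, fun ⟨x, hx⟩ ↦ Padic.not_isSquare_of_odd_valuation ?_ ⟨x, hx ▸ sq x⟩⟩
  have hnorm : ‖1 - 7 * θ ^ 2‖ = ‖(3 : ℚ_[3])‖ := by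
    refine Padic.norm_eq_of_norm_sub_lt_right (hcong.trans_lt ?_)
    rw [h3]
    norm_num
  rw [Padic.valuation_eq_of_norm_eq hnorm]
  simp

theorem no_sqrt_one_sub_seven_theta_sq (θ : ℚ_[3]) (hθ : ‖θ‖ = 1)
    (hθ10 : ‖θ - 10‖ ≤ (3 : ℝ) ^ (-3 : ℤ))
    (hroot : 12 * θ ^ 3 - 4 * θ + 1 = 0) :
    ‖(1 - 7 * θ ^ 2) - 3‖ ≤ (3 : ℝ) ^ (-3 : ℤ) ∧
      ¬ ∃ x : ℚ_[3], x ^ 2 = 1 - 7 * θ ^ 2 :=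
  no_sqrt_one_sub_seven_theta_sq_general θ hθ10
end

section
/- Let p = 3 and θ = 1 + 9(1 + ε) with |ε|_3 < 1, and let √D ∈ ℚ_3 be a square root of D = θ⁴ + 2θ² - 4θ + 1 with √D = 3(1 + ε'), |ε'|_3 < 1. Then |1 - 7θ² + √D|_3 = 1/3, and hence 2(1 - 7θ² + √D) has no square root in ℚ_3. -/
/-!
Substituting `θ = 10 + 9ε` and `s = 3(1 + ε')` gives
`1 - 7θ² + s = 3 · (-232 + (ε' - ε (420 + 189ε)))`, and the bracket is a `3`-adic unit because it
is congruent modulo `3` to `-232`, which is prime to `3`. Hence `1 - 7θ² + s`, and with it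
`2(1 - 7θ² + s)`, has valuation `1`, while every square has even valuation.
-/

namespace IsUltrametricDist

theorem norm_add_eq_left_of_norm_lt {S : Type*} [SeminormedAddGroup S] [IsUltrametricDist S]
    {a x : S} (h : ‖x‖ < ‖a‖) : ‖a + x‖ = ‖a‖ := by
  rw [norm_add_eq_max_of_norm_ne_norm h.ne', max_eq_left h.le]

theorem norm_sub_mul_lt {R : Type*} [SeminormedRing R] [IsUltrametricDist R] {r : ℝ}
    {a b c : R} (ha : ‖a‖ < r) (hb : ‖b‖ < r) (hc : ‖c‖ ≤ 1) : ‖a - b * c‖ < r := by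
  have hbc : ‖b * c‖ < r :=
    (norm_mul_le b c).trans_lt (by nlinarith [norm_nonneg b])
  rw [sub_eq_add_neg]
  exact (norm_add_le_max _ _).trans_lt (max_lt ha (by rwa [norm_neg]))

end IsUltrametricDist

namespace Padic

variable {p : ℕ} [Fact p.Prime]

theorem valuation_eq_of_norm_eq_zpow {y : ℚ_[p]} {n : ℤ} (h : ‖y‖ = (p : ℝ) ^ (-n)) :
    y.valuation = n := by
  have hp : (1 : ℝ) < p := by exact_mod_cast (Fact.out : p.Prime).one_lt
  have hy : y ≠ 0 := by
    rintro rfl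
    exact zpow_ne_zero _ (zero_lt_one.trans hp).ne' (h.symm.trans norm_zero)
  rw [norm_eq_zpow_neg_valuation hy] at h
  exact neg_injective (zpow_right_injective₀ (zero_lt_one.trans hp) hp.ne' h)

theorem not_exists_sq_eq_of_odd_valuation {y : ℚ_[p]} (hy : Odd y.valuation) :
    ¬ ∃ x : ℚ_[p], x ^ 2 = y := by
  rintro ⟨x, rfl⟩
  rw [valuation_pow, Nat.cast_two] at hy
  exact Int.not_even_iff_odd.2 hy (even_two_mul _)

end Padic

open IsUltrametricDist Padic in
theorem no_sqrt_case_n_one_general (ε ε' : ℚ_[3]) (hε : ‖ε‖ < 1) (hε' : ‖ε'‖ < 1)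
    (θ s : ℚ_[3]) (hθ : θ = 1 + 9 * (1 + ε)) (hs : s = 3 * (1 + ε')) :
    ‖1 - 7 * θ ^ 2 + s‖ = (3 : ℝ)⁻¹ ∧
      ¬ ∃ x : ℚ_[3], x ^ 2 = 2 * (1 - 7 * θ ^ 2 + s) := by
  have hcoeff : ‖(420 + 189 * ε : ℚ_[3])‖ ≤ 1 := by
    refine (norm_add_le_max _ _).trans (max_le ?_ ?_)
    · simpa using norm_natCast_le_one ℚ_[3] 420
    · rw [norm_mul]
      exact mul_le_one₀ (by simpa using norm_natCast_le_one ℚ_[3] 189) (norm_nonneg _) hε.le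
  have hunit : ‖(-232 + (ε' - ε * (420 + 189 * ε)) : ℚ_[3])‖ = 1 := by
    have h232 : ‖(-232 : ℚ_[3])‖ = 1 := by
      simpa using norm_natCast_eq_one_iff.2 (by norm_num : Nat.Coprime 3 232)
    rw [norm_add_eq_left_of_norm_lt (h232 ▸ norm_sub_mul_lt hε' hε hcoeff), h232]
  have hnorm : ‖1 - 7 * θ ^ 2 + s‖ = (3 : ℝ)⁻¹ := by
    rw [hθ, hs, show (1 - 7 * (1 + 9 * (1 + ε)) ^ 2 + 3 * (1 + ε') : ℚ_[3])
        = 3 * (-232 + (ε' - ε * (420 + 189 * ε))) by ring,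
      norm_mul, hunit, mul_one]
    simpa using norm_p (p := 3)
  have htwo : ‖(2 : ℚ_[3])‖ = 1 := by
    simpa using norm_natCast_eq_one_iff.2 (by norm_num : Nat.Coprime 3 2)
  refine ⟨hnorm, not_exists_sq_eq_of_odd_valuation ?_⟩
  rw [valuation_eq_of_norm_eq_zpow (n := 1) (by rw [norm_mul, htwo, hnorm]; norm_num)]
  exact odd_one

theorem no_sqrt_case_n_one (ε ε' : ℚ_[3]) (hε : ‖ε‖ < 1) (hε' : ‖ε'‖ < 1)
    (θ s : ℚ_[3]) (hθ : θ = 1 + 9 * (1 + ε)) (hs : s = 3 * (1 + ε'))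
    (hsD : s ^ 2 = θ ^ 4 + 2 * θ ^ 2 - 4 * θ + 1) :
    ‖1 - 7 * θ ^ 2 + s‖ = (3 : ℝ)⁻¹ ∧
      ¬ ∃ x : ℚ_[3], x ^ 2 = 2 * (1 - 7 * θ ^ 2 + s) :=
  no_sqrt_case_n_one_general ε ε' hε hε' θ s hθ hs
end
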